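/- arXiv:1011.1686 — 4 statements merged into one kernel-verified Lean document; each statement's English description precedes it below -/
import Mathlib

section
/- Let n ≥ 1 and let f : ℝ → ℝ be a continuous function. Then f is (the evaluation of) a real polynomial of degree less than n if and only if for every x₀ ∈ ℝ and all x⁺, x⁻ : Fin n → ℝ one has ∑_{ε ∈ ({-1,1})^n} sign(ε) · f(x₀ + ∑_{i} x^{ε_i}_i) = 0, where sign(ε) := ∏_i ε_i and x^{ε_i}_i denotes x⁺_i if ε_i = 1 and x⁻_i if ε_i = -1. -/
/-!
Splitting off the first sign shows that the alternating sum of order `n + 1` of `f` is the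
alternating sum of order `n` of `y ↦ f (y + x⁺₀) - f (y + x⁻₀)`; for a polynomial this difference
has smaller degree, which gives one direction. Conversely, the steps `x⁺ = δ`, `x⁻ = 0` turn the
alternating sums into the iterated differences `Δ_δ^n f`, so these all vanish. Subtract from `f`
its interpolant at `0, …, n - 1`. On each grid `(1/m)ℤ` the difference agrees with a polynomial of
degree `< n` (its interpolant at `n` consecutive grid points), which has the `n` roots
`0, 1, …, n - 1` and so is zero. Hence `f` agrees with its interpolant on `ℚ`, and by continuity
on `ℝ`.
-/

open Polynomial Finset

def alternatingCubeSum {M R : Type*} [AddCommMonoid M] [CommRing R] (n : ℕ) (f : M → R)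
    (x₀ : M) (xp xm : Fin n → M) : R :=
  ∑ ε : Fin n → Bool,
    (∏ i, if ε i then (1 : R) else -1) * f (x₀ + ∑ i, if ε i then xp i else xm i)

section AlternatingCubeSum

variable {M R : Type*} [AddCommMonoid M] [CommRing R]

theorem alternatingCubeSum_zero (f : M → R) (x₀ : M) (xp xm : Fin 0 → M) :
    alternatingCubeSum 0 f x₀ xp xm = f x₀ := by
  simp [alternatingCubeSum]

theorem alternatingCubeSum_succ (n : ℕ) (f : M → R) (x₀ : M) (xp xm : Fin (n + 1) → M) :
    alternatingCubeSum (n + 1) f x₀ xp xm =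
      alternatingCubeSum n (fun y => f (y + xp 0) - f (y + xm 0)) x₀ (Fin.tail xp)
        (Fin.tail xm) := by
  rw [alternatingCubeSum, ← (Fin.consEquiv fun _ => Bool).sum_comp, Fintype.sum_prod_type,
    Fintype.sum_bool, alternatingCubeSum]
  simp only [sub_eq_add_neg, mul_add, mul_neg, sum_add_distrib]
  congr 1 <;> refine sum_congr rfl fun ε _ => ?_ <;>
  simp only [Fin.consEquiv_apply, Fin.prod_univ_succ, Fin.sum_univ_succ, Fin.cons_zero,
    Fin.cons_succ, Fin.tail, if_true, if_false, Bool.false_eq_true, one_mul, neg_mul,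
    add_comm _ (xp 0), add_comm _ (xm 0)] <;>
  rw [add_left_comm]

theorem alternatingCubeSum_const_zero_eq_fwdDiff_iter (n : ℕ) (f : M → R) (x δ : M) :
    alternatingCubeSum n f x (fun _ => δ) 0 = (fwdDiff δ)^[n] f x := by
  induction n generalizing f with
  | zero => exact alternatingCubeSum_zero f x _ _
  | succ n ih =>
    rw [alternatingCubeSum_succ, Function.iterate_succ_apply, ← ih]
    simp only [Pi.zero_apply, add_zero]
    rfl

end AlternatingCubeSum

theorem Polynomial.degree_taylor_sub_taylor_lt {R : Type*} [CommRing R] {p : R[X]} {n : ℕ}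
    (hp : p.degree < ↑(n + 1)) (a b : R) : (taylor a p - taylor b p).degree < n := by
  rw [degree_lt_iff_coeff_zero]
  intro m hm
  have hconst : (hasseDeriv m p).natDegree = 0 := by
    have := natDegree_le_of_degree_le (Order.le_of_lt_succ hp)
    have := natDegree_hasseDeriv_le p m
    omega
  rw [coeff_sub, taylor_coeff, taylor_coeff, eq_C_of_natDegree_eq_zero hconst, eval_C, eval_C,
    sub_self]

theorem alternatingCubeSum_eval_eq_zero {R : Type*} [CommRing R] {n : ℕ} {P : R[X]}
    (hP : P.degree < n) (x₀ : R) (xp xm : Fin n → R) :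
    alternatingCubeSum n P.eval x₀ xp xm = 0 := by
  induction n generalizing P with
  | zero =>
    obtain rfl : P = 0 := by simpa using hP
    rw [alternatingCubeSum_zero, eval_zero]
  | succ n ih =>
    rw [alternatingCubeSum_succ]
    convert ih (degree_taylor_sub_taylor_lt hP (xp 0) (xm 0)) (Fin.tail xp) (Fin.tail xm) using 2
    simp [taylor_eval]

theorem Polynomial.fwdDiff_iter_eval_eq_zero_of_degree_lt {R : Type*} [CommRing R] {n : ℕ}
    {P : R[X]} (hP : P.degree < n) (δ x : R) : (fwdDiff δ)^[n] P.eval x = 0 := by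
  rw [← alternatingCubeSum_const_zero_eq_fwdDiff_iter]
  exact alternatingCubeSum_eval_eq_zero hP x _ _

theorem fwdDiff_iter_sub {M G : Type*} [AddCommMonoid M] [AddCommGroup G] (h : M) (f g : M → G)
    (n : ℕ) : (fwdDiff h)^[n] (f - g) = (fwdDiff h)^[n] f - (fwdDiff h)^[n] g := by
  simpa only [fwdDiff_aux.coe_fwdDiffₗ_pow] using map_sub (fwdDiff_aux.fwdDiffₗ M G h ^ n) f g

theorem apply_add_zsmul_eq_zero_of_fwdDiff_iter_eq_zero {M G : Type*} [AddCommGroup M]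
    [AddCommGroup G] {n : ℕ} {g : M → G} {δ x : M} (hg : ∀ y, (fwdDiff δ)^[n] g y = 0)
    (hzero : ∀ i < n, g (x + (i : ℤ) • δ) = 0) (j : ℤ) : g (x + j • δ) = 0 := by
  induction n generalizing g j with
  | zero => exact hg _
  | succ n ih =>
    have hstep : ∀ j : ℤ, g (x + (j + 1) • δ) = g (x + j • δ) := fun j => by
      have hdiff : fwdDiff δ g (x + j • δ) = 0 := by
        refine ih (fun y => by rw [← Function.iterate_succ_apply]; exact hg y) (fun i hi => ?_) j
        rw [fwdDiff, add_assoc, ← add_one_zsmul, hzero i (by omega), sub_zero]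
        exact_mod_cast hzero (i + 1) (by omega)
      rwa [fwdDiff, add_assoc, ← add_one_zsmul, sub_eq_zero] at hdiff
    induction j using Int.induction_on with
    | zero => simpa using hzero 0 (by omega)
    | succ j hj => rw [hstep, hj]
    | pred j hj => rwa [← hstep, sub_add_cancel]

theorem exists_degree_lt_eval_eq {F : Type*} [Field F] {n : ℕ} {v : ℕ → F}
    (hv : Set.InjOn v (range n)) (g : F → F) :
    ∃ P : F[X], P.degree < n ∧ ∀ i < n, P.eval (v i) = g (v i) :=
  ⟨Lagrange.interpolate (range n) v (fun i => g (v i)),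
    by simpa using Lagrange.degree_interpolate_lt _ hv,
    fun _ hi => Lagrange.eval_interpolate_at_node _ hv (mem_range.2 hi)⟩

/-- `g` agrees on the grid with its interpolant at `x, x + δ, …, x + (n - 1) δ`, which then has
the `n` roots `x + k m δ`. -/
theorem apply_add_intCast_mul_eq_zero_of_fwdDiff_iter_eq_zero {F : Type*} [Field F] [CharZero F]
    {n m : ℕ} {g : F → F} {δ x : F} (hδ : δ ≠ 0) (hm : m ≠ 0)
    (hg : ∀ y, (fwdDiff δ)^[n] g y = 0) (hzero : ∀ k < n, g (x + (k * m : ℕ) * δ) = 0)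
    (j : ℤ) : g (x + j * δ) = 0 := by
  have hnodes : Set.InjOn (fun i : ℕ => x + i * δ) (range n) := fun a _ b _ hab => by
    simpa [hδ] using hab
  obtain ⟨P, hPdeg, hPg⟩ := exists_degree_lt_eval_eq hnodes g
  have hgP : ∀ j : ℤ, (g - P.eval) (x + j * δ) = 0 := by
    have := apply_add_zsmul_eq_zero_of_fwdDiff_iter_eq_zero (g := g - P.eval) (δ := δ) (x := x)
      (fun y => by
        rw [fwdDiff_iter_sub, Pi.sub_apply, hg, fwdDiff_iter_eval_eq_zero_of_degree_lt hPdeg,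
          sub_zero])
      (fun i hi => by simpa [sub_eq_zero] using (hPg i hi).symm)
    simpa only [zsmul_eq_mul] using this
  have hP : P = 0 := by
    refine eq_zero_of_degree_lt_of_eval_index_eq_zero (v := fun k : ℕ => x + (k * m : ℕ) * δ)
      (range n) (fun a _ b _ hab => ?_) (by simpa using hPdeg) (fun k hk => ?_)
    · simpa [hδ, hm] using hab
    · have := hgP (k * m : ℕ)
      rwa [Pi.sub_apply, Int.cast_natCast, hzero k (mem_range.1 hk), zero_sub, neg_eq_zero] at this
  simpa [hP] using hgP j

theorem Continuous.exists_polynomial_of_fwdDiff_iter_eq_zero {f : ℝ → ℝ} (hf : Continuous f)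
    {n : ℕ} (h : ∀ δ y, (fwdDiff δ)^[n] f y = 0) :
    ∃ P : ℝ[X], P.degree < n ∧ f = fun x => P.eval x := by
  obtain ⟨P, hPdeg, hPf⟩ := exists_degree_lt_eval_eq (v := ((↑) : ℕ → ℝ)) Nat.cast_injective.injOn f
  refine ⟨P, hPdeg, ?_⟩
  have hg : ∀ δ y, (fwdDiff δ)^[n] (f - P.eval) y = 0 := fun δ y => by
    rw [fwdDiff_iter_sub, Pi.sub_apply, h, fwdDiff_iter_eval_eq_zero_of_degree_lt hPdeg, sub_zero]
  have hrat : ∀ q : ℚ, (f - P.eval) q = 0 := fun q => by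
    have := apply_add_intCast_mul_eq_zero_of_fwdDiff_iter_eq_zero (x := 0)
      (δ := 1 / (q.den : ℝ)) (by simp) q.den_nz (hg _)
      (fun k hk => by simp [q.den_nz, hPf k hk]) q.num
    rwa [zero_add, ← div_eq_mul_one_div, ← Rat.cast_def] at this
  have hzero : f - P.eval = 0 :=
    Continuous.ext_on Rat.denseRange_cast (hf.sub P.continuous) continuous_const
      fun _ ⟨q, hq⟩ => hq ▸ hrat q
  exact funext fun x => sub_eq_zero.1 (congrFun hzero x)

theorem frechet_polynomial_characterization_general (n : ℕ)
    (f : ℝ → ℝ) (hf : Continuous f) :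
    (∃ P : Polynomial ℝ, P.degree < (n : ℕ) ∧ f = fun x => P.eval x) ↔
      (∀ (x₀ : ℝ) (xp xm : Fin n → ℝ),
        ∑ ε : Fin n → Bool,
          (∏ i, if ε i then (1 : ℝ) else -1) *
            f (x₀ + ∑ i, if ε i then xp i else xm i) = 0) := by
  refine ⟨?_, fun H => hf.exists_polynomial_of_fwdDiff_iter_eq_zero fun δ y => ?_⟩
  · rintro ⟨P, hP, rfl⟩ x₀ xp xm
    exact alternatingCubeSum_eval_eq_zero hP x₀ xp xm
  · rw [← alternatingCubeSum_const_zero_eq_fwdDiff_iter]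
    exact H y _ _

/-- Fréchet's theorem (1912): a continuous function `f : ℝ → ℝ` is a polynomial of
degree less than `n` iff all alternating sums of order `n` vanish. -/
theorem frechet_polynomial_characterization (n : ℕ) (hn : 1 ≤ n)
    (f : ℝ → ℝ) (hf : Continuous f) :
    (∃ P : Polynomial ℝ, P.degree < (n : ℕ) ∧ f = fun x => P.eval x) ↔
      (∀ (x₀ : ℝ) (xp xm : Fin n → ℝ),
        ∑ ε : Fin n → Bool,
          (∏ i, if ε i then (1 : ℝ) else -1) *
            f (x₀ + ∑ i, if ε i then xp i else xm i) = 0) :=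
  frechet_polynomial_characterization_general n f hf
end

section
/- Let n ≥ 1 and let P : Polynomial ℝ have degree less than n. Then for every x₀ ∈ ℝ and all x⁺, x⁻ : Fin n → ℝ one has ∑_{ε ∈ ({-1,1})^n} sign(ε) · P.eval(x₀ + ∑_i x^{ε_i}_i) = 0, where sign(ε) := ∏_i ε_i and x^{ε_i}_i denotes x⁺_i if ε_i = 1 and x⁻_i if ε_i = -1. -/
/-!
Splitting off the first coordinate writes the alternating sum of order `n + 1` for `f` as the
alternating sum of order `n` for the difference `y ↦ f (y + x⁺₀) - f (y + x⁻₀)`. For a polynomial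
`P` this difference is `taylor x⁺₀ P - taylor x⁻₀ P`, whose leading terms cancel, so every step
lowers the degree; after `n` steps the polynomial has degree `< 0`, i.e. it is zero.
-/

open Polynomial

variable {R : Type*} [CommRing R]

def cubeDifference {n : ℕ} (f : R → R) (x₀ : R) (xp xm : Fin n → R) : R :=
  ∑ ε : Fin n → Bool,
    (∏ i, if ε i then (1 : R) else -1) * f (x₀ + ∑ i, if ε i then xp i else xm i)

theorem cubeDifference_zero (f : R → R) (x₀ : R) (xp xm : Fin 0 → R) :
    cubeDifference f x₀ xp xm = f x₀ := by
  simp [cubeDifference]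

theorem cubeDifference_succ {n : ℕ} (f : R → R) (x₀ : R) (xp xm : Fin (n + 1) → R) :
    cubeDifference f x₀ xp xm =
      cubeDifference (fun y ↦ f (y + xp 0) - f (y + xm 0)) x₀ (Fin.tail xp) (Fin.tail xm) := by
  rw [cubeDifference, ← (Fin.consEquiv fun _ ↦ Bool).sum_comp, Fintype.sum_prod_type,
    Fintype.sum_bool, ← Finset.sum_add_distrib, cubeDifference]
  refine Finset.sum_congr rfl fun ε _ ↦ ?_
  simp only [Fin.consEquiv_apply, Fin.prod_univ_succ, Fin.sum_univ_succ, Fin.cons_zero,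
    Fin.cons_succ, Fin.tail, if_true, Bool.false_eq_true, if_false]
  ring_nf

theorem degree_taylor_sub_taylor_lt {P : R[X]} (hP : P ≠ 0) (a b : R) :
    (taylor a P - taylor b P).degree < P.degree :=
  degree_taylor P a ▸ degree_sub_lt_left (by simp only [degree_taylor])
    (by rwa [Ne, taylor_eq_zero]) (by simp only [leadingCoeff_taylor])

theorem cubeDifference_eval_eq_zero {n : ℕ} {P : R[X]} (hP : P.degree < n) (x₀ : R)
    (xp xm : Fin n → R) : cubeDifference P.eval x₀ xp xm = 0 := by
  induction n generalizing P with
  | zero =>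
    rw [degree_eq_bot.mp (Nat.WithBot.lt_zero_iff.mp hP), cubeDifference_zero, eval_zero]
  | succ n ih =>
    rcases eq_or_ne P 0 with rfl | hP0
    · simp [cubeDifference]
    have hQ : (taylor (xp 0) P - taylor (xm 0) P).degree < n :=
      (degree_taylor_sub_taylor_lt hP0 _ _).trans_le (Order.le_of_lt_succ hP)
    simpa [cubeDifference_succ, taylor_eval] using ih hQ (Fin.tail xp) (Fin.tail xm)

theorem frechet_polynomial_forward_general (n : ℕ)
    (P : Polynomial ℝ) (hP : P.degree < (n : ℕ)) :
    ∀ (x₀ : ℝ) (xp xm : Fin n → ℝ),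
      ∑ ε : Fin n → Bool,
        (∏ i, if ε i then (1 : ℝ) else -1) *
          P.eval (x₀ + ∑ i, if ε i then xp i else xm i) = 0 :=
  cubeDifference_eval_eq_zero hP

/-- Forward direction of Fréchet's theorem: a polynomial of degree less than `n`
has vanishing alternating sums of order `n`. -/
theorem frechet_polynomial_forward (n : ℕ) (hn : 1 ≤ n)
    (P : Polynomial ℝ) (hP : P.degree < (n : ℕ)) :
    ∀ (x₀ : ℝ) (xp xm : Fin n → ℝ),
      ∑ ε : Fin n → Bool,
        (∏ i, if ε i then (1 : ℝ) else -1) *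
          P.eval (x₀ + ∑ i, if ε i then xp i else xm i) = 0 :=
  frechet_polynomial_forward_general n P hP
end

section
/- Let u : ℝ → ℂ be a C¹ loop with u(t) ≠ 0 for all t. Suppose the set Z = {t ∈ [0,1) : Im(u(t)) = 0} is finite and for every t ∈ Z the derivative of t ↦ Im(u(t)) is nonzero at t. Then ∑_{t ∈ Z} sign(Re(u(t))) · sign(deriv (fun s => Im(u s)) t) = 2 · (1/(2πi)) ∫_0^1 (deriv u t)/(u t) dt. -/
/-!
Write `u = exp ∘ L` with `L' = u' / u`, a `C¹` logarithm along the loop. Then `Im u(t) = 0`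
exactly when `φ(t) = Im L(t) / π` is an integer, and at such a crossing
`sign (Re u) · sign ((Im u)') = sign φ'`, because `(Im u)' = Im (u · L') = Re u · Im L'` there.
Since `exp (L 1) = exp (L 0)`, the integral `∫₀¹ u'/u = L 1 - L 0` is `2πi n`, and `φ` gains `2n`
over each period. Finally `⌊φ⌋` is constant away from the integer crossings of `φ` and jumps by
`sign φ'` at each transversal one, so the signed count over a period `[a, a + 1]` with `a` not a
crossing is `⌊φ (a + 1)⌋ - ⌊φ a⌋ = 2n`.
-/

open Set Filter Topology

lemma floor_eq_floor_of_forall_notMem_range {φ : ℝ → ℝ} {a b : ℝ} (hφ : ContinuousOn φ (Icc a b))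
    (hab : a ≤ b) (h : ∀ t ∈ Icc a b, φ t ∉ range ((↑) : ℤ → ℝ)) : ⌊φ b⌋ = ⌊φ a⌋ := by
  rw [Int.floor_eq_iff]
  constructor
  · by_contra! hlt
    obtain ⟨t, ht, hφt⟩ := intermediate_value_Icc' hab hφ ⟨hlt.le, Int.floor_le (φ a)⟩
    exact h t ht ⟨_, hφt.symm⟩
  · by_contra! hle
    obtain ⟨t, ht, hφt⟩ := intermediate_value_Icc hab hφ ⟨(Int.lt_floor_add_one (φ a)).le, hle⟩
    exact h t ht ⟨⌊φ a⌋ + 1, by push_cast; exact hφt.symm⟩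

lemma eventually_sign_sub_eq_sign_deriv_mul {φ : ℝ → ℝ} {t₀ : ℝ} (hd : deriv φ t₀ ≠ 0) :
    ∀ᶠ t in 𝓝 t₀,
      SignType.sign (φ t - φ t₀) = SignType.sign (deriv φ t₀) * SignType.sign (t - t₀) := by
  have hd' : deriv (fun t => φ t - φ t₀) t₀ = deriv φ t₀ := deriv_sub_const _
  rcases hd.lt_or_gt with hneg | hpos
  · filter_upwards [eventually_nhdsWithin_sign_eq_of_deriv_neg (f := fun t => φ t - φ t₀)
      (by rwa [hd']) (sub_self _)] with t ht
    rw [ht, sign_neg hneg, ← neg_sub t, Left.sign_neg, neg_one_mul]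
  · filter_upwards [eventually_nhdsWithin_sign_eq_of_deriv_pos (f := fun t => φ t - φ t₀)
      (by rwa [hd']) (sub_self _)] with t ht
    rw [ht, sign_pos hpos, one_mul]

lemma eventually_floor_sub_floor_eq_sign {φ : ℝ → ℝ} {t₀ : ℝ} {m : ℤ} (hd : deriv φ t₀ ≠ 0)
    (hm : φ t₀ = m) :
    ∀ᶠ p in 𝓝[<] t₀ ×ˢ 𝓝[>] t₀, ((⌊φ p.2⌋ - ⌊φ p.1⌋ : ℤ) : ℝ) = Real.sign (deriv φ t₀) := by
  have hnear : ∀ᶠ t in 𝓝 t₀, φ t ∈ Ioo ((m : ℝ) - 1) (m + 1) :=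
    (differentiableAt_of_deriv_ne_zero hd).continuousAt.eventually_mem
      (Ioo_mem_nhds (by linarith) (by linarith))
  have hsign := eventually_sign_sub_eq_sign_deriv_mul hd
  rw [hm] at hsign
  have hleft : ∀ᶠ t in 𝓝[<] t₀, φ t ∈ Ioo ((m : ℝ) - 1) (m + 1) ∧
      SignType.sign (φ t - m) = -SignType.sign (deriv φ t₀) := by
    filter_upwards [nhdsWithin_le_nhds (hnear.and hsign), self_mem_nhdsWithin]
      with t ⟨hφt, hst⟩ (ht : t < t₀)
    rw [hst, sign_neg (sub_neg.2 ht), mul_neg_one]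
    exact ⟨hφt, rfl⟩
  have hright : ∀ᶠ t in 𝓝[>] t₀, φ t ∈ Ioo ((m : ℝ) - 1) (m + 1) ∧
      SignType.sign (φ t - m) = SignType.sign (deriv φ t₀) := by
    filter_upwards [nhdsWithin_le_nhds (hnear.and hsign), self_mem_nhdsWithin]
      with t ⟨hφt, hst⟩ (ht : t₀ < t)
    rw [hst, sign_pos (sub_pos.2 ht), mul_one]
    exact ⟨hφt, rfl⟩
  filter_upwards [hleft.prod_mk hright] with ⟨t₁, t₂⟩ ⟨⟨h₁, s₁⟩, h₂, s₂⟩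
  have floor_below {x : ℝ} (hx : x ∈ Ioo ((m : ℝ) - 1) (m + 1)) (hs : x - m < 0) : ⌊x⌋ = m - 1 :=
    Int.floor_eq_iff.2 ⟨by push_cast; linarith [hx.1], by push_cast; linarith⟩
  have floor_above {x : ℝ} (hx : x ∈ Ioo ((m : ℝ) - 1) (m + 1)) (hs : 0 < x - m) : ⌊x⌋ = m :=
    Int.floor_eq_iff.2 ⟨by linarith, hx.2⟩
  rcases hd.lt_or_gt with hneg | hpos
  · rw [sign_neg hneg, neg_neg, sign_eq_one_iff] at s₁
    rw [sign_neg hneg, sign_eq_neg_one_iff] at s₂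
    rw [floor_below h₂ s₂, floor_above h₁ s₁, Real.sign_of_neg hneg]
    simp
  · rw [sign_pos hpos, sign_eq_neg_one_iff] at s₁
    rw [sign_pos hpos, sign_eq_one_iff] at s₂
    rw [floor_below h₁ s₁, floor_above h₂ s₂, Real.sign_of_pos hpos]
    simp

theorem sum_sign_deriv_eq_floor_sub_floor {φ : ℝ → ℝ} (hφ : Continuous φ) (S : Finset ℝ)
    {a b : ℝ} (hab : a ≤ b) (ha : φ a ∉ range ((↑) : ℤ → ℝ)) (hb : φ b ∉ range ((↑) : ℤ → ℝ))
    (hS : ∀ t, t ∈ S ↔ t ∈ Icc a b ∧ φ t ∈ range ((↑) : ℤ → ℝ))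
    (hreg : ∀ t ∈ S, deriv φ t ≠ 0) :
    ∑ t ∈ S, Real.sign (deriv φ t) = ((⌊φ b⌋ - ⌊φ a⌋ : ℤ) : ℝ) := by
  classical
  induction S using Finset.induction_on_max generalizing b with
  | empty =>
    have hfloor := floor_eq_floor_of_forall_notMem_range hφ.continuousOn hab
      fun t ht hφt => Finset.notMem_empty t ((hS t).2 ⟨ht, hφt⟩)
    simp [hfloor]
  | insert t₀ s hlt ih =>
    obtain ⟨⟨hat₀, ht₀b⟩, m, hm⟩ := (hS t₀).1 (s.mem_insert_self t₀)
    have hat₀ : a < t₀ := hat₀.lt_of_ne (by rintro rfl; exact ha ⟨m, hm⟩)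
    have ht₀b : t₀ < b := ht₀b.lt_of_ne (by rintro rfl; exact hb ⟨m, hm⟩)
    have hleft : ∀ᶠ t in 𝓝[<] t₀, t < t₀ ∧ a < t ∧ ∀ x ∈ s, x < t :=
      eventually_mem_nhdsWithin.and <| nhdsWithin_le_nhds <|
        (eventually_gt_nhds hat₀).and <| (Filter.eventually_all_finset s).2 fun x hx =>
          eventually_gt_nhds (hlt x hx)
    have hright : ∀ᶠ t in 𝓝[>] t₀, t₀ < t ∧ t < b :=
      eventually_mem_nhdsWithin.and <| nhdsWithin_le_nhds <| eventually_lt_nhds ht₀b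
    obtain ⟨⟨b₁, b₂⟩, ⟨⟨hb₁t₀, hab₁, hsb₁⟩, ht₀b₂, hb₂b⟩, hjump⟩ :=
      ((hleft.prod_mk hright).and
        (eventually_floor_sub_floor_eq_sign (hreg t₀ (s.mem_insert_self t₀)) hm.symm)).exists
    have hs : ∀ t, t ∈ s ↔ t ∈ Icc a b₁ ∧ φ t ∈ range ((↑) : ℤ → ℝ) := by
      intro t
      constructor
      · intro ht
        obtain ⟨⟨hat, -⟩, hφt⟩ := (hS t).1 (Finset.mem_insert_of_mem ht)
        exact ⟨⟨hat, (hsb₁ t ht).le⟩, hφt⟩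
      · rintro ⟨⟨hat, htb₁⟩, hφt⟩
        have := (hS t).2 ⟨⟨hat, by linarith⟩, hφt⟩
        exact (Finset.mem_insert.1 this).resolve_left (by rintro rfl; linarith)
    have hb₁ : φ b₁ ∉ range ((↑) : ℤ → ℝ) := fun hφ =>
      (hsb₁ b₁ ((hs b₁).2 ⟨⟨hab₁.le, le_rfl⟩, hφ⟩)).false
    have hfloor : ⌊φ b⌋ = ⌊φ b₂⌋ := by
      refine floor_eq_floor_of_forall_notMem_range hφ.continuousOn hb₂b.le fun t ht hφt => ?_
      rcases Finset.mem_insert.1 ((hS t).2 ⟨⟨by linarith [ht.1], ht.2⟩, hφt⟩) with rfl | hts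
      · linarith [ht.1]
      · linarith [ht.1, hlt t hts]
    rw [Finset.sum_insert fun h => (hlt t₀ h).false, ih hab₁.le hb₁ hs
      fun t ht => hreg t (Finset.mem_insert_of_mem ht), hfloor, ← hjump]
    push_cast
    ring

section toIcoMod

variable {α : Type*} [AddCommGroup α] [LinearOrder α] [IsOrderedAddMonoid α] [Archimedean α]
  {p : α} (hp : 0 < p)

lemma Function.Periodic.toIcoMod_eq {β : Type*} {f : α → β} (hf : Function.Periodic f p)
    (a x : α) : f (toIcoMod hp a x) = f x :=
  hf.sub_zsmul_eq (toIcoDiv hp a x)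

lemma injOn_toIcoMod (a b : α) : InjOn (toIcoMod hp a) (Ico b (b + p)) := fun x hx y hy hxy => by
  have := congrArg (toIcoMod hp b) hxy
  rwa [toIcoMod_toIcoMod, toIcoMod_toIcoMod, (toIcoMod_eq_self hp).2 hx,
    (toIcoMod_eq_self hp).2 hy] at this

lemma mem_image_toIcoMod_iff [DecidableEq α] {P : α → Prop} (hP : Function.Periodic P p)
    {Z : Finset α} {b : α} (hZ : ∀ t, t ∈ Z ↔ t ∈ Ico b (b + p) ∧ P t) (a t : α) :
    t ∈ Z.image (toIcoMod hp a) ↔ t ∈ Ico a (a + p) ∧ P t := by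
  simp only [Finset.mem_image, hZ]
  constructor
  · rintro ⟨z, ⟨-, hz⟩, rfl⟩
    exact ⟨toIcoMod_mem_Ico hp a z, (hP.toIcoMod_eq hp a z).mpr hz⟩
  · rintro ⟨ht, hPt⟩
    refine ⟨toIcoMod hp b t, ⟨toIcoMod_mem_Ico hp b t, (hP.toIcoMod_eq hp b t).mpr hPt⟩, ?_⟩
    rw [toIcoMod_toIcoMod, (toIcoMod_eq_self hp).2 ht]

end toIcoMod

lemma add_intCast_mem_range_iff {x : ℝ} (c : ℤ) :
    x + c ∈ range ((↑) : ℤ → ℝ) ↔ x ∈ range ((↑) : ℤ → ℝ) := by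
  simp only [← Int.fract_eq_zero_iff, Int.fract_add_intCast]

theorem sum_sign_deriv_eq_of_add_intCast {φ : ℝ → ℝ} (hφ : Continuous φ) {c : ℤ}
    (hper : ∀ t, φ (t + 1) = φ t + c) (Z : Finset ℝ)
    (hZ : ∀ t, t ∈ Z ↔ t ∈ Ico 0 1 ∧ φ t ∈ range ((↑) : ℤ → ℝ))
    (hreg : ∀ t ∈ Z, deriv φ t ≠ 0) :
    ∑ t ∈ Z, Real.sign (deriv φ t) = c := by
  classical
  have hcross : Function.Periodic (fun t => φ t ∈ range ((↑) : ℤ → ℝ)) 1 := fun t => by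
    simp only [hper, add_intCast_mem_range_iff]
  have hderiv : Function.Periodic (deriv φ) 1 := fun t => by
    rw [← deriv_comp_add_const, funext hper, deriv_add_const]
  obtain ⟨a, ha01, haZ⟩ := (Ioo_infinite (zero_lt_one' ℝ)).exists_notMem_finset Z
  have ha : φ a ∉ range ((↑) : ℤ → ℝ) := fun h => haZ ((hZ a).2 ⟨Ioo_subset_Ico_self ha01, h⟩)
  have hb : φ (a + 1) ∉ range ((↑) : ℤ → ℝ) := by rwa [hper, add_intCast_mem_range_iff]
  -- `toIcoMod one_pos a` moves the crossings in `[0, 1)` onto the period `[a, a + 1]`,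
  -- whose endpoints are not crossings.
  have hS : ∀ t, t ∈ Z.image (toIcoMod one_pos a) ↔
      t ∈ Icc a (a + 1) ∧ φ t ∈ range ((↑) : ℤ → ℝ) := fun t => by
    rw [mem_image_toIcoMod_iff one_pos hcross (b := 0) (by simpa using hZ)]
    exact ⟨fun ⟨ht, hφt⟩ => ⟨Ico_subset_Icc_self ht, hφt⟩,
      fun ⟨ht, hφt⟩ => ⟨⟨ht.1, ht.2.lt_of_ne (by rintro rfl; exact hb hφt)⟩, hφt⟩⟩
  have hreg' : ∀ t ∈ Z.image (toIcoMod one_pos a), deriv φ t ≠ 0 := by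
    simp only [Finset.mem_image]
    rintro _ ⟨z, hz, rfl⟩
    rw [hderiv.toIcoMod_eq]
    exact hreg z hz
  have hinj : InjOn (toIcoMod one_pos a) Z := (injOn_toIcoMod one_pos a 0).mono fun t ht => by
    simpa using ((hZ t).1 ht).1
  calc ∑ t ∈ Z, Real.sign (deriv φ t)
      = ∑ t ∈ Z, Real.sign (deriv φ (toIcoMod one_pos a t)) := by
        simp only [hderiv.toIcoMod_eq]
    _ = ∑ t ∈ Z.image (toIcoMod one_pos a), Real.sign (deriv φ t) :=
        (Finset.sum_image (f := fun t => Real.sign (deriv φ t)) hinj).symm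
    _ = ((⌊φ (a + 1)⌋ - ⌊φ a⌋ : ℤ) : ℝ) :=
        sum_sign_deriv_eq_floor_sub_floor hφ _ (by linarith) ha hb hS hreg'
    _ = c := by rw [hper, Int.floor_add_intCast]; push_cast; ring

lemma Function.Periodic.deriv {F : Type*} [NormedAddCommGroup F] [NormedSpace ℝ F] {f : ℝ → F}
    {c : ℝ} (hf : Function.Periodic f c) : Function.Periodic (deriv f) c := fun x => by
  rw [← deriv_comp_add_const, funext hf]

lemma add_period_eq_of_hasDerivAt {E : Type*} [NormedAddCommGroup E] [NormedSpace ℝ E]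
    {L g : ℝ → E} {c : ℝ} (hL : ∀ t, HasDerivAt L (g t) t) (hg : Function.Periodic g c) (t : ℝ) :
    L (t + c) = L t + (L c - L 0) := by
  have hF : ∀ t, HasDerivAt (fun t => L (t + c) - L t) 0 t := fun t => by
    have := ((hL (t + c)).comp_add_const t c).sub (hL t)
    rwa [hg t, sub_self] at this
  have := is_const_of_deriv_eq_zero (fun t => (hF t).differentiableAt) (fun t => (hF t).deriv) t 0
  simp only [zero_add] at this
  rw [← this]
  abel

lemma exists_hasDerivAt_exp_eq {u : ℝ → ℂ} (hu : Differentiable ℝ u) (hu' : Continuous (deriv u))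
    (hne : ∀ t, u t ≠ 0) :
    ∃ L : ℝ → ℂ, (∀ t, HasDerivAt L (deriv u t / u t) t) ∧ ∀ t, Complex.exp (L t) = u t := by
  set g : ℝ → ℂ := fun t => deriv u t / u t
  have hg : Continuous g := hu'.div hu.continuous hne
  set L : ℝ → ℂ := fun t => Complex.log (u 0) + ∫ s in (0 : ℝ)..t, g s
  have hL : ∀ t, HasDerivAt L (g t) t := fun t =>
    (hg.integral_hasStrictDerivAt 0 t).hasDerivAt.const_add _
  have hF : ∀ t, HasDerivAt (fun t => u t * Complex.exp (-L t)) 0 t := fun t => by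
    have h : HasDerivAt (fun t => u t * Complex.exp (-L t))
        (deriv u t * Complex.exp (-L t) + u t * (Complex.exp (-L t) * -g t)) t :=
      (hu t).hasDerivAt.mul (hL t).neg.cexp
    have hug : u t * g t = deriv u t := mul_div_cancel₀ _ (hne t)
    convert h using 1
    rw [← hug]
    ring
  refine ⟨L, hL, fun t => ?_⟩
  have := is_const_of_deriv_eq_zero (fun t => (hF t).differentiableAt) (fun t => (hF t).deriv) t 0
  simp only [L, intervalIntegral.integral_same, add_zero, Complex.exp_neg,
    Complex.exp_log (hne 0), mul_inv_cancel₀ (hne 0)] at this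
  exact ((mul_inv_eq_one₀ (Complex.exp_ne_zero _)).1 this).symm

lemma Complex.exp_im_eq_zero_iff (z : ℂ) :
    (Complex.exp z).im = 0 ↔ z.im / Real.pi ∈ range ((↑) : ℤ → ℝ) := by
  rw [Complex.exp_im, mul_eq_zero, or_iff_right (Real.exp_pos _).ne', Real.sin_eq_zero_iff]
  simp only [mem_range, eq_div_iff Real.pi_ne_zero]

lemma exists_add_one_eq_add_int_mul_two_pi_I {u L : ℝ → ℂ} (hper : Function.Periodic u 1)
    (hL : ∀ t, HasDerivAt L (deriv u t / u t) t) (hexp : ∀ t, Complex.exp (L t) = u t) :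
    ∃ n : ℤ, ∀ t, L (t + 1) = L t + n * (2 * Real.pi * Complex.I) := by
  obtain ⟨n, hn⟩ := Complex.exp_eq_exp_iff_exists_int.1
    (by rw [hexp, hexp, ← hper 0, zero_add] : Complex.exp (L 1) = Complex.exp (L 0))
  refine ⟨n, fun t => ?_⟩
  rw [add_period_eq_of_hasDerivAt hL (hper.deriv.div hper), hn, add_sub_cancel_left]

lemma Real.sign_mul (x y : ℝ) : Real.sign (x * y) = Real.sign x * Real.sign y := by
  rcases lt_trichotomy x 0 with hx | rfl | hx <;> rcases lt_trichotomy y 0 with hy | rfl | hy <;>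
    simp [Real.sign_of_neg, Real.sign_of_pos, mul_pos_of_neg_of_neg, mul_neg_of_neg_of_pos,
      mul_neg_of_pos_of_neg, *]

lemma Real.sign_div_of_pos {x y : ℝ} (hy : 0 < y) : Real.sign (x / y) = Real.sign x := by
  rw [div_eq_mul_inv, Real.sign_mul, Real.sign_inv, Real.sign_of_pos hy, mul_one]

lemma Complex.sign_re_mul_sign_im_mul {w : ℂ} (hw : w ≠ 0) (hwim : w.im = 0) (z : ℂ) :
    Real.sign w.re * Real.sign (w * z).im = Real.sign z.im := by
  have hre : w.re ≠ 0 := fun h => hw (Complex.ext h hwim)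
  rw [Complex.mul_im, hwim, zero_mul, add_zero, Real.sign_mul, ← mul_assoc]
  rcases Real.sign_apply_eq_of_ne_zero _ hre with h | h <;> rw [h] <;> ring

lemma sign_re_mul_sign_deriv_im {u : ℝ → ℂ} {t : ℝ} (hu : DifferentiableAt ℝ u t)
    (hne : u t ≠ 0) (him : (u t).im = 0) :
    Real.sign (u t).re * Real.sign (deriv (fun s => (u s).im) t)
      = Real.sign (deriv u t / u t).im := by
  have hderiv : deriv (fun s => (u s).im) t = (u t * (deriv u t / u t)).im := by
    rw [mul_div_cancel₀ _ hne]
    exact (Complex.imCLM.hasFDerivAt.comp_hasDerivAt t hu.hasDerivAt).deriv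
  rw [hderiv, Complex.sign_re_mul_sign_im_mul hne him]

/-- Crossing formula: twice the winding number of a `C¹` loop avoiding `0` equals the
signed count of its transversal crossings of the real axis. -/
theorem crossing_formula (u : ℝ → ℂ) (hu : ContDiff ℝ 1 u)
    (hper : ∀ t, u (t + 1) = u t) (hne : ∀ t, u t ≠ 0)
    (hZ : {t ∈ Set.Ico (0:ℝ) 1 | (u t).im = 0}.Finite)
    (hreg : ∀ t ∈ {t ∈ Set.Ico (0:ℝ) 1 | (u t).im = 0},
      deriv (fun s => (u s).im) t ≠ 0) :
    ((∑ t ∈ hZ.toFinset,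
        Real.sign ((u t).re) * Real.sign (deriv (fun s => (u s).im) t) : ℝ) : ℂ)
      = 2 * ((1 / (2 * (Real.pi : ℂ) * Complex.I)) *
          ∫ t in (0:ℝ)..1, deriv u t / u t) := by
  have hud : Differentiable ℝ u := hu.differentiable one_ne_zero
  have hu' : Continuous (deriv u) := hu.continuous_deriv le_rfl
  obtain ⟨L, hL, hexp⟩ := exists_hasDerivAt_exp_eq hud hu' hne
  obtain ⟨n, hn⟩ := exists_add_one_eq_add_int_mul_two_pi_I hper hL hexp
  have hwind : ∫ t in (0 : ℝ)..1, deriv u t / u t = n * (2 * Real.pi * Complex.I) := by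
    rw [intervalIntegral.integral_eq_sub_of_hasDerivAt (fun t _ => hL t)
      ((hu'.div hud.continuous hne).intervalIntegrable 0 1), ← zero_add 1, hn, add_sub_cancel_left]
  set φ : ℝ → ℝ := fun t => (L t).im / Real.pi
  have hφ : ∀ t, HasDerivAt φ ((deriv u t / u t).im / Real.pi) t := fun t =>
    (Complex.imCLM.hasFDerivAt.comp_hasDerivAt t (hL t)).div_const _
  have hφper : ∀ t, φ (t + 1) = φ t + (2 * n : ℤ) := fun t => by
    simp [φ, hn, add_div, mul_div_assoc, Real.pi_ne_zero, mul_comm]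
  have hterm : ∀ t, (u t).im = 0 →
      Real.sign (u t).re * Real.sign (deriv (fun s => (u s).im) t) = Real.sign (deriv φ t) :=
    fun t ht => by
      rw [sign_re_mul_sign_deriv_im (hud t) (hne t) ht, (hφ t).deriv,
        Real.sign_div_of_pos Real.pi_pos]
  have hZ' : ∀ t, t ∈ hZ.toFinset ↔ t ∈ Ico 0 1 ∧ φ t ∈ range ((↑) : ℤ → ℝ) := fun t => by
    rw [hZ.mem_toFinset]
    exact Iff.rfl.and (by rw [← hexp, Complex.exp_im_eq_zero_iff])
  have hregφ : ∀ t ∈ hZ.toFinset, deriv φ t ≠ 0 := fun t ht => by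
    obtain ⟨-, him⟩ := hZ.mem_toFinset.1 ht
    have hre : (u t).re ≠ 0 := fun h => hne t (Complex.ext h him)
    rw [ne_eq, ← Real.sign_eq_zero_iff, ← hterm t him, ← Real.sign_mul, Real.sign_eq_zero_iff]
    exact mul_ne_zero hre (hreg t (hZ.mem_toFinset.1 ht))
  rw [Finset.sum_congr rfl fun t ht => hterm t (hZ.mem_toFinset.1 ht).2,
    sum_sign_deriv_eq_of_add_intCast (continuous_iff_continuousAt.2 fun t => (hφ t).continuousAt)
      hφper _ hZ' hregφ, hwind]
  push_cast
  field_simp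
end

section
/- Let H : ℝ × [0,1] → ℂ be a regular homotopy: H is continuous, H(t+1, s) = H(t, s) for all t, s, each H(·, s) is continuously differentiable in t with ∂H/∂t(t, s) ≠ 0 for all t, s, and the map (t, s) ↦ ∂H/∂t(t, s) is continuous. Assume γ₀ := H(·, 0) and γ₁ := H(·, 1) are C² loops. Then ind(γ₀) = ind(γ₁). -/
/-!
The integrand `γ''/γ'` is the derivative of a continuous logarithm `θ` of `γ'`, so the integral is
the increment `θ 1 - θ 0`; it depends only on `γ'`, since two continuous logarithms differ by a
constant of `2πiℤ`. Along a regular homotopy, compactness makes the ratio of the derivatives at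
nearby parameters uniformly close to `1`, so adding the principal logarithm of that ratio, which
takes the same value at `t = 0` and `t = 1` by periodicity, turns a continuous logarithm for one
parameter into one for the other with the same increment. Connectedness of `[0, 1]` does the rest.
-/

open Complex Set Topology

theorem Complex.inv_mem_slitPlane {z : ℂ} (hz : z ∈ slitPlane) : z⁻¹ ∈ slitPlane := by
  rw [mem_slitPlane_iff] at hz ⊢
  have hnormSq : 0 < normSq z := normSq_pos.mpr (slitPlane_ne_zero (mem_slitPlane_iff.mpr hz))
  rw [inv_re, inv_im, neg_div, neg_ne_zero]
  exact hz.imp (fun h => div_pos h hnormSq) (fun h => div_ne_zero h hnormSq.ne')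

def IsContinuousLogOn {X : Type*} [TopologicalSpace X] (θ f : X → ℂ) (S : Set X) : Prop :=
  ContinuousOn θ S ∧ ∀ x ∈ S, exp (θ x) = f x

namespace IsContinuousLogOn

variable {X : Type*} [TopologicalSpace X] {θ θ' f g : X → ℂ} {S : Set X}

theorem mono {T : Set X} (hθ : IsContinuousLogOn θ f S) (hTS : T ⊆ S) :
    IsContinuousLogOn θ f T :=
  ⟨hθ.1.mono hTS, fun x hx => hθ.2 x (hTS hx)⟩

theorem sub_eq_sub (hS : IsPreconnected S) (hθ : IsContinuousLogOn θ f S)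
    (hθ' : IsContinuousLogOn θ' f S) {a b : X} (ha : a ∈ S) (hb : b ∈ S) :
    θ b - θ a = θ' b - θ' a := by
  have hmaps : MapsTo (θ - θ') S (AddSubgroup.zmultiples (2 * Real.pi * I)) := by
    intro x hx
    obtain ⟨n, hn⟩ := exp_eq_exp_iff_exists_int.mp ((hθ.2 x hx).trans (hθ'.2 x hx).symm)
    exact ⟨n, by simp [hn, zsmul_eq_mul]⟩
  have hconst := hS.constant_of_mapsTo
    (isDiscrete_iff_discreteTopology.mpr (NormedSpace.discreteTopology_zmultiples _))
    (hθ.1.sub hθ'.1) hmaps hb ha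
  simp only [Pi.sub_apply] at hconst
  linear_combination hconst

theorem exists_of_div_mem_slitPlane (hθ : IsContinuousLogOn θ g S) (hf : ContinuousOn f S)
    (hfg : ∀ x ∈ S, f x / g x ∈ slitPlane) :
    ∃ θ' : X → ℂ, IsContinuousLogOn θ' f S ∧
      ∀ a ∈ S, ∀ b ∈ S, f b / g b = f a / g a → θ' b - θ' a = θ b - θ a := by
  have hg : ContinuousOn g S :=
    (continuous_exp.comp_continuousOn hθ.1).congr fun x hx => (hθ.2 x hx).symm
  have hgne : ∀ x ∈ S, g x ≠ 0 := fun x hx => hθ.2 x hx ▸ exp_ne_zero _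
  refine ⟨fun x => θ x + log (f x / g x), ⟨?_, fun x hx => ?_⟩, fun a _ b _ hab => ?_⟩
  · exact hθ.1.add (ContinuousOn.clog (hf.div hg hgne) hfg)
  · rw [exp_add, hθ.2 x hx, exp_log (slitPlane_ne_zero (hfg x hx)),
      mul_div_cancel₀ _ (hgne x hx)]
  · simp only [hab]
    ring

end IsContinuousLogOn

theorem IsCompact.eventually_forall_div_mem_slitPlane {X Y : Type*} [UniformSpace X]
    [UniformSpace Y] {F : X → Y → ℂ} {U : Set X} {K : Set Y} (hU : IsCompact U)
    (hK : IsCompact K) (hF : ContinuousOn ↿F (U ×ˢ K)) {x : X} (hx : x ∈ U)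
    (hne : ∀ y ∈ K, F x y ≠ 0) :
    ∀ᶠ x' in 𝓝[U] x, ∀ y ∈ K, F x' y / F x y ∈ slitPlane := by
  set G : X → Y → ℂ := fun x' y => F x' y / F x y
  have hG : ContinuousOn ↿G (U ×ˢ K) :=
    hF.div (hF.comp (continuous_const.prodMk continuous_snd).continuousOn
      fun q hq => ⟨hx, hq.2⟩) fun q hq => hne q.2 hq.2
  have hGx : ∀ y ∈ K, G x y = 1 := fun y hy => div_self (hne y hy)
  filter_upwards [Metric.tendstoUniformlyOn_iff.mp
    (((hU.prod hK).uniformContinuousOn_of_continuous hG).tendstoUniformlyOn hx) 1 one_pos]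
    with x' hx' y hy
  apply ball_one_subset_slitPlane
  rw [Metric.mem_ball, dist_comm, ← hGx y hy]
  exact hx' y hy

theorem IsContinuousLogOn.exists_sub_eq_of_homotopy {X Y : Type*} [UniformSpace X]
    [UniformSpace Y] {F : X → Y → ℂ} {U : Set X} {K : Set Y} (hU : IsCompact U)
    (hU' : IsPreconnected U) (hK : IsCompact K) (hF : ContinuousOn ↿F (U ×ˢ K))
    (hne : ∀ x ∈ U, ∀ y ∈ K, F x y ≠ 0) {a b : Y} (ha : a ∈ K) (hb : b ∈ K)
    (hloop : ∀ x ∈ U, F x b = F x a) {x₀ x₁ : X} (hx₀ : x₀ ∈ U) (hx₁ : x₁ ∈ U) {θ₀ : Y → ℂ}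
    (hθ₀ : IsContinuousLogOn θ₀ (F x₀) K) :
    ∃ θ₁ : Y → ℂ, IsContinuousLogOn θ₁ (F x₁) K ∧ θ₁ b - θ₁ a = θ₀ b - θ₀ a := by
  set P : X → X → Prop := fun x x' => ∀ θ, IsContinuousLogOn θ (F x) K →
    ∃ θ', IsContinuousLogOn θ' (F x') K ∧ θ' b - θ' a = θ b - θ a
  have hslice : ∀ x ∈ U, ContinuousOn (F x) K := fun x hx =>
    hF.comp (continuous_const.prodMk continuous_id).continuousOn fun y hy => ⟨hx, hy⟩
  have hstep : ∀ x ∈ U, ∀ x' ∈ U, (∀ y ∈ K, F x' y / F x y ∈ slitPlane) → P x x' := by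
    intro x hx x' hx' hslit θ hθ
    obtain ⟨θ', hθ', hinc⟩ := hθ.exists_of_div_mem_slitPlane (hslice x' hx') hslit
    exact ⟨θ', hθ', hinc a ha b hb (by rw [hloop x hx, hloop x' hx'])⟩
  refine hU'.induction₂' P (fun x hx => ?_) (fun x y z _ _ _ hxy hyz θ hθ => ?_) hx₀ hx₁ θ₀ hθ₀
  · filter_upwards [hU.eventually_forall_div_mem_slitPlane hK hF hx (hne x hx),
      self_mem_nhdsWithin] with x' hslit hx'
    refine ⟨hstep x hx x' hx' hslit, hstep x' hx' x hx fun y hy => ?_⟩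
    simpa only [inv_div] using inv_mem_slitPlane (hslit y hy)
  · obtain ⟨θ', hθ', hinc⟩ := hxy θ hθ
    obtain ⟨θ'', hθ'', hinc'⟩ := hyz θ' hθ'
    exact ⟨θ'', hθ'', hinc'.trans hinc⟩

theorem exp_eq_of_hasDerivAt_div {f f' θ : ℝ → ℂ} (hf : ∀ t, HasDerivAt f (f' t) t)
    (hθ : ∀ t, HasDerivAt θ (f' t / f t) t) (hne : ∀ t, f t ≠ 0) {a : ℝ}
    (ha : exp (θ a) = f a) (t : ℝ) : exp (θ t) = f t := by
  have hderiv : ∀ u, HasDerivAt (fun u => f u * exp (-θ u)) 0 u := fun u => by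
    refine ((hf u).mul (hθ u).neg.cexp).congr_deriv ?_
    field_simp [hne u]
    ring
  have hconst := is_const_of_deriv_eq_zero (fun u => (hderiv u).differentiableAt)
    (fun u => (hderiv u).deriv) t a
  rw [← ha, ← exp_add, add_neg_cancel, exp_zero, exp_neg, mul_inv_eq_one₀ (exp_ne_zero _)]
    at hconst
  exact hconst.symm

theorem exists_isContinuousLogOn_of_contDiff {f : ℝ → ℂ} (hf : ContDiff ℝ 1 f)
    (hne : ∀ t, f t ≠ 0) :
    ∃ θ : ℝ → ℂ, IsContinuousLogOn θ f univ ∧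
      ∀ a b, θ b - θ a = ∫ t in a..b, deriv f t / f t := by
  have hcont : Continuous fun t => deriv f t / f t :=
    (hf.continuous_deriv le_rfl).div hf.continuous hne
  set θ : ℝ → ℂ := fun t => log (f 0) + ∫ u in (0 : ℝ)..t, deriv f u / f u
  have hθ : ∀ t, HasDerivAt θ (deriv f t / f t) t := fun t =>
    (hcont.integral_hasStrictDerivAt 0 t).hasDerivAt.const_add _
  have hθ0 : exp (θ 0) = f 0 := by simp [θ, exp_log (hne 0)]
  have hθdiff : Differentiable ℝ θ := fun t => (hθ t).differentiableAt
  refine ⟨θ, ⟨hθdiff.continuous.continuousOn, fun t _ => exp_eq_of_hasDerivAt_div (fun t => (hf.differentiable one_ne_zero t).hasDerivAt)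
      hθ hne hθ0 t⟩, fun a b => ?_⟩
  simp only [θ, add_sub_add_left_eq_sub]
  exact intervalIntegral.integral_interval_sub_left (hcont.intervalIntegrable _ _)
    (hcont.intervalIntegrable _ _)

theorem whitney_index_regular_homotopy_invariant_general (H : ℝ → ℝ → ℂ)
    (hper : ∀ t : ℝ, ∀ s ∈ Set.Icc (0:ℝ) 1, H (t + 1) s = H t s)
    (himm : ∀ t : ℝ, ∀ s ∈ Set.Icc (0:ℝ) 1, deriv (fun t' => H t' s) t ≠ 0)
    (hderivcont : ContinuousOn (fun q : ℝ × ℝ => deriv (fun t' => H t' q.2) q.1)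
      (Set.univ ×ˢ Set.Icc 0 1))
    (γ₀ γ₁ : ℝ → ℂ) (hγ₀ : γ₀ = fun t => H t 0) (hγ₁ : γ₁ = fun t => H t 1)
    (hC₀ : ContDiff ℝ 2 γ₀) (hC₁ : ContDiff ℝ 2 γ₁) :
    (1 / (2 * (Real.pi : ℂ) * Complex.I)) *
        (∫ t in (0:ℝ)..1, deriv (deriv γ₀) t / deriv γ₀ t)
      = (1 / (2 * (Real.pi : ℂ) * Complex.I)) *
          (∫ t in (0:ℝ)..1, deriv (deriv γ₁) t / deriv γ₁ t) := by
  subst hγ₀ hγ₁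
  set F : ℝ → ℝ → ℂ := fun s t => deriv (fun t' => H t' s) t
  have hF : ContinuousOn ↿F (Icc 0 1 ×ˢ Icc 0 1) :=
    hderivcont.comp continuous_swap.continuousOn fun q hq => ⟨mem_univ _, hq.1⟩
  have hloop : ∀ s ∈ Icc (0 : ℝ) 1, F s 1 = F s 0 := fun s hs => by
    simpa [F, hper _ s hs] using (deriv_comp_add_const (fun t => H t s) 1 0).symm
  have hlog : ∀ s ∈ Icc (0 : ℝ) 1, ContDiff ℝ 2 (fun t => H t s) →
      ∃ θ, IsContinuousLogOn θ (F s) (Icc 0 1) ∧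
        θ 1 - θ 0 = ∫ t in (0:ℝ)..1, deriv (F s) t / F s t := fun s hs hC => by
    obtain ⟨θ, hθ, hinc⟩ := exists_isContinuousLogOn_of_contDiff hC.deriv' (himm · s hs)
    exact ⟨θ, hθ.mono (subset_univ _), hinc 0 1⟩
  have h0 : (0 : ℝ) ∈ Icc (0 : ℝ) 1 := left_mem_Icc.mpr zero_le_one
  have h1 : (1 : ℝ) ∈ Icc (0 : ℝ) 1 := right_mem_Icc.mpr zero_le_one
  obtain ⟨θ₀, hθ₀, hinc₀⟩ := hlog 0 h0 hC₀
  obtain ⟨θ₁, hθ₁, hinc₁⟩ := hlog 1 h1 hC₁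
  obtain ⟨θ, hθ, hinc⟩ := hθ₀.exists_sub_eq_of_homotopy isCompact_Icc isPreconnected_Icc
    isCompact_Icc hF (fun s hs t _ => himm t s hs) h0 h1 hloop h0 h1
  rw [← hinc₀, ← hinc₁, ← hinc, hθ.sub_eq_sub isPreconnected_Icc hθ₁ h0 h1]

/-- Invariance of the Whitney index under regular homotopy (homotopy through
immersed loops with continuously varying derivative). -/
theorem whitney_index_regular_homotopy_invariant (H : ℝ → ℝ → ℂ)
    (hcont : ContinuousOn (fun q : ℝ × ℝ => H q.1 q.2) (Set.univ ×ˢ Set.Icc 0 1))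
    (hper : ∀ t : ℝ, ∀ s ∈ Set.Icc (0:ℝ) 1, H (t + 1) s = H t s)
    (hC1 : ∀ s ∈ Set.Icc (0:ℝ) 1, ContDiff ℝ 1 (fun t => H t s))
    (himm : ∀ t : ℝ, ∀ s ∈ Set.Icc (0:ℝ) 1, deriv (fun t' => H t' s) t ≠ 0)
    (hderivcont : ContinuousOn (fun q : ℝ × ℝ => deriv (fun t' => H t' q.2) q.1)
      (Set.univ ×ˢ Set.Icc 0 1))
    (γ₀ γ₁ : ℝ → ℂ) (hγ₀ : γ₀ = fun t => H t 0) (hγ₁ : γ₁ = fun t => H t 1)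
    (hC₀ : ContDiff ℝ 2 γ₀) (hC₁ : ContDiff ℝ 2 γ₁) :
    (1 / (2 * (Real.pi : ℂ) * Complex.I)) *
        (∫ t in (0:ℝ)..1, deriv (deriv γ₀) t / deriv γ₀ t)
      = (1 / (2 * (Real.pi : ℂ) * Complex.I)) *
          (∫ t in (0:ℝ)..1, deriv (deriv γ₁) t / deriv γ₁ t) :=
  whitney_index_regular_homotopy_invariant_general H hper himm hderivcont γ₀ γ₁ hγ₀ hγ₁ hC₀ hC₁
end
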